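/- Let G be a finite p-group generated by a normal subset T, and for k ≥ 1 define T_k = { [t₁,…,t_k] : t_i ∈ T } (left-normed commutators). Then T_k is a normal subset of G and T_k generates the k-th term γ_k(G) of the lower central series of G. -/

import Mathlib

/-- `commSet T k` is the set `T_{k+1}` of left-normed commutators
`[t₁,…,t_{k+1}] = [[…[t₁,t₂],…],t_{k+1}]` with all entries in `T`,
where `[a,t] = a⁻¹t⁻¹at`. -/
def commSet {G : Type*} [Group G] (T : Set G) : ℕ → Set G
  | 0 => T
  | k + 1 => {x | ∃ a ∈ commSet T k, ∃ t ∈ T, x = a⁻¹ * t⁻¹ * a * t}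

/-!
If `S` and `T` are normal subsets of a group, the subgroup `N` generated by the commutators
`[s, t]` is normal, and modulo `N` the images of `S` and `T` commute, hence so do the subgroups
they generate. So `N = [⟨S⟩, ⟨T⟩]`, and induction on the length of the commutators gives
`⟨T_k⟩ = γ_k(⟨T⟩)`.
-/

open Subgroup
open scoped commutatorElement

section

variable {G : Type*} [Group G]

lemma Subgroup.normal_closure_of_conj_mem {S : Set G} (hS : ∀ g : G, ∀ s ∈ S, g * s * g⁻¹ ∈ S) :
    (closure S).Normal :=
  normalizer_eq_top_iff.mp <| top_le_iff.mp <|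
    le_normalizer_closure_iff.mpr fun g _ s hs => subset_closure (hS g s hs)

lemma Subgroup.closure_commutators_eq_commutator {S T : Set G}
    (hS : ∀ g : G, ∀ s ∈ S, g * s * g⁻¹ ∈ S) (hT : ∀ g : G, ∀ t ∈ T, g * t * g⁻¹ ∈ T) :
    closure {x | ∃ s ∈ S, ∃ t ∈ T, x = s⁻¹ * t⁻¹ * s * t} = ⁅closure S, closure T⁆ := by
  set N := closure {x | ∃ s ∈ S, ∃ t ∈ T, x = s⁻¹ * t⁻¹ * s * t}
  apply le_antisymm
  · rw [closure_le]
    rintro _ ⟨s, hs, t, ht, rfl⟩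
    have hst : s⁻¹ * t⁻¹ * s * t = ⁅s⁻¹, t⁻¹⁆ := by group
    rw [SetLike.mem_coe, hst]
    exact commutator_mem_commutator (inv_mem (subset_closure hs)) (inv_mem (subset_closure ht))
  · have : N.Normal := normal_closure_of_conj_mem <| by
      rintro g _ ⟨s, hs, t, ht, rfl⟩
      exact ⟨g * s * g⁻¹, hS g s hs, g * t * g⁻¹, hT g t ht, by group⟩
    have hcomm : QuotientGroup.mk' N '' S ⊆ centralizer (QuotientGroup.mk' N '' T) := by
      rintro _ ⟨s, hs, rfl⟩ _ ⟨t, ht, rfl⟩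
      rw [QuotientGroup.mk'_apply, QuotientGroup.mk'_apply, ← QuotientGroup.mk_mul,
        ← QuotientGroup.mk_mul, QuotientGroup.eq]
      exact subset_closure ⟨s, hs, t, ht, by group⟩
    rw [← QuotientGroup.ker_mk' N, ← map_eq_bot_iff, map_commutator, MonoidHom.map_closure,
      MonoidHom.map_closure, commutator_eq_bot_iff_le_centralizer, closure_le,
      centralizer_closure]
    exact hcomm

variable {T : Set G}

lemma conj_mem_commSet (hT : ∀ g : G, ∀ t ∈ T, g * t * g⁻¹ ∈ T) (n : ℕ) :
    ∀ g : G, ∀ x ∈ commSet T n, g * x * g⁻¹ ∈ commSet T n := by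
  induction n with
  | zero => exact hT
  | succ n ih =>
    rintro g _ ⟨a, ha, t, ht, rfl⟩
    exact ⟨g * a * g⁻¹, ih g a ha, g * t * g⁻¹, hT g t ht, by group⟩

lemma closure_commSet (hT : ∀ g : G, ∀ t ∈ T, g * t * g⁻¹ ∈ T) (n : ℕ) :
    closure (commSet T n) = (closure T).lowerCentralSeries n := by
  induction n with
  | zero => rfl
  | succ n ih =>
    rw [Subgroup.lowerCentralSeries_succ, ← ih]
    exact closure_commutators_eq_commutator (conj_mem_commSet hT n) hT

end

theorem stmt8_general (G : Type*) [Group G] (T : Set G)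
    (hTnormal : ∀ g : G, ∀ t ∈ T, g * t * g⁻¹ ∈ T)
    (hTgen : Subgroup.closure T = ⊤) (k : ℕ) :
    (∀ g : G, ∀ x ∈ commSet T (k - 1), g * x * g⁻¹ ∈ commSet T (k - 1)) ∧
      Subgroup.closure (commSet T (k - 1)) = (⊤ : Subgroup G).lowerCentralSeries (k - 1) :=
  ⟨conj_mem_commSet hTnormal (k - 1), hTgen ▸ closure_commSet hTnormal (k - 1)⟩

/-- If `G` is a finite `p`-group generated by a normal subset `T`,
then for every `k ≥ 1` the set `T_k` of left-normed commutators of length `k`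
in elements of `T` is a normal subset of `G` generating `γ_k(G)`
(which is `lowerCentralSeries G (k-1)` in Mathlib's indexing). -/
theorem stmt8 (p : ℕ) (hp : p.Prime) (G : Type*) [Group G] [Finite G]
    (hG : IsPGroup p G) (T : Set G)
    (hTnormal : ∀ g : G, ∀ t ∈ T, g * t * g⁻¹ ∈ T)
    (hTgen : Subgroup.closure T = ⊤) (k : ℕ) (hk : 1 ≤ k) :
    (∀ g : G, ∀ x ∈ commSet T (k - 1), g * x * g⁻¹ ∈ commSet T (k - 1)) ∧
      Subgroup.closure (commSet T (k - 1)) = (⊤ : Subgroup G).lowerCentralSeries (k - 1) :=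
  stmt8_general G T hTnormal hTgen k
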